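/- Let X be countable, φ a stationary policy with transition-rate matrix Q_φ satisfying ‖Σ_{n=0}^∞ Q_φⁿ‖ ≤ K, let c be a bounded cost function, and let μ : X → [1, K] satisfy μ(x) ≥ 1 + Σ_y q(y|x,a)μ(y) for all x, a. Fix β̃ ∈ [(K−1)/K, 1) and define the transformed model on X̃ = X ∪ {x̃} with an absorbing cost-free state x̃, costs c̃(x,a) = c(x,a)/μ(x), and transition probabilities p̃(y|x,a) = q(y|x,a)μ(y)/(β̃ μ(x)) for x,y ∈ X, p̃(x̃|x,a) = 1 − (1/(β̃ μ(x))) Σ_{y∈X} q(y|x,a)μ(y), p̃(x̃|x̃,ã) = 1. Then for all x ∈ X and n ≥ 0, β̃ⁿ P̃_φⁿ c̃_φ(x) = μ(x)⁻¹ Q_φⁿ c_φ(x), and consequently the total cost v^φ(x) := Σ_{n=0}^∞ Q_φⁿ c_φ(x) equals μ(x) · ṽ_β̃^φ(x), where ṽ_β̃^φ(x) := Σ_{n=0}^∞ β̃ⁿ P̃_φⁿ c̃_φ(x). -/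

import Mathlib

/-! Up to the factor `β⁻¹`, the transformed kernel restricted to `X` is the similarity transform
`μ⁻¹ Q_φ μ` of `Q_φ`, and the transformed cost is `μ⁻¹ c_φ`. Scaling a kernel by `β` scales its
`n`-th power by `βⁿ`, a similarity transform commutes with taking powers, and the added state is
absorbing and cost-free, so it never contributes: hence `βⁿ P̃ⁿ c̃ = μ⁻¹ Qⁿ c` on `X`, and summing
over `n` gives `v = μ ṽ`. -/

/-- Iterated application of a real matrix to a function: `iterR P f n = Pⁿ f`. -/
noncomputable def iterR {X : Type*} (P : X → X → ℝ) (f : X → ℝ) : ℕ → X → ℝ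
  | 0 => f
  | n + 1 => fun x => ∑' y, P x y * iterR P f n y

section iterR

variable {X : Type*}

theorem iterR_succ_apply (P : X → X → ℝ) (f : X → ℝ) (n : ℕ) (x : X) :
    iterR P f (n + 1) x = ∑' y, P x y * iterR P f n y := rfl

theorem iterR_const_mul (β : ℝ) (P : X → X → ℝ) (f : X → ℝ) (n : ℕ) (x : X) :
    iterR (fun x y => β * P x y) f n x = β ^ n * iterR P f n x := by
  induction n generalizing x with
  | zero => simp [iterR]
  | succ n ih =>
    simp only [iterR_succ_apply, ih, pow_succ, ← tsum_mul_left]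
    congr with y
    ring

theorem iterR_conj (Q : X → X → ℝ) (c μ : X → ℝ) (hμ : ∀ x, μ x ≠ 0) (n : ℕ) (x : X) :
    iterR (fun x y => (μ x)⁻¹ * Q x y * μ y) (fun x => (μ x)⁻¹ * c x) n x
      = (μ x)⁻¹ * iterR Q c n x := by
  induction n generalizing x with
  | zero => rfl
  | succ n ih =>
    simp only [iterR_succ_apply, ih, ← tsum_mul_left]
    congr with y
    rw [mul_assoc _ (μ y), mul_inv_cancel_left₀ (hμ y), mul_assoc]

theorem iterR_apply_eq_zero_of_absorbing {P : X → X → ℝ} {f : X → ℝ} {s : X}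
    (hP : ∀ y ≠ s, P s y = 0) (hf : f s = 0) (n : ℕ) : iterR P f n s = 0 := by
  induction n with
  | zero => exact hf
  | succ n ih =>
    have hterm : ∀ y, P s y * iterR P f n y = 0 := fun y => by
      rcases eq_or_ne y s with rfl | hy
      · rw [ih, mul_zero]
      · rw [hP y hy, zero_mul]
    simp only [iterR_succ_apply, hterm, tsum_zero]

theorem iterR_some {P : Option X → Option X → ℝ} {f : Option X → ℝ}
    (hP : ∀ y : X, P none (some y) = 0) (hf : f none = 0) (n : ℕ) (x : X) :
    iterR P f n (some x)
      = iterR (fun x y => P (some x) (some y)) (fun x => f (some x)) n x := by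
  have hnone : ∀ n, iterR P f n none = 0 :=
    iterR_apply_eq_zero_of_absorbing (by rintro (_ | y) h; exacts [absurd rfl h, hP y]) hf
  induction n generalizing x with
  | zero => rfl
  | succ n ih =>
    rw [iterR_succ_apply, iterR_succ_apply, ← (Option.some_injective X).tsum_eq]
    · simp only [ih]
    · rintro (_ | y) hy
      · simp [hnone] at hy
      · exact ⟨y, rfl⟩

end iterR

section hvTransform

variable {X : Type*} {Q : X → X → ℝ} {c μ : X → ℝ} {β : ℝ}
  {Pt : Option X → Option X → ℝ} {ct : Option X → ℝ}

theorem hv_iterR_eq (hμ : ∀ x, μ x ≠ 0)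
    (hPt : ∀ x y, β * Pt (some x) (some y) = (μ x)⁻¹ * Q x y * μ y)
    (hPt_none : ∀ y, Pt none (some y) = 0) (hct : ∀ x, ct (some x) = (μ x)⁻¹ * c x)
    (hct_none : ct none = 0) (n : ℕ) (x : X) :
    β ^ n * iterR Pt ct n (some x) = (μ x)⁻¹ * iterR Q c n x := by
  rw [iterR_some hPt_none hct_none, ← iterR_const_mul]
  simp only [hPt, hct]
  exact iterR_conj Q c μ hμ n x

theorem hv_tsum_eq (hμ : ∀ x, μ x ≠ 0)
    (hPt : ∀ x y, β * Pt (some x) (some y) = (μ x)⁻¹ * Q x y * μ y)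
    (hPt_none : ∀ y, Pt none (some y) = 0) (hct : ∀ x, ct (some x) = (μ x)⁻¹ * c x)
    (hct_none : ct none = 0) (x : X) :
    ∑' n, iterR Q c n x = μ x * ∑' n, β ^ n * iterR Pt ct n (some x) := by
  rw [← tsum_mul_left]
  congr with n
  rw [hv_iterR_eq hμ hPt hPt_none hct hct_none, mul_inv_cancel_left₀ (hμ x)]

end hvTransform

theorem stmt4 {X A : Type*}
    (q : X → A → X → ℝ) (hq0 : ∀ x a y, 0 ≤ q x a y) (hqs : ∀ x a, Summable (q x a))
    (c : X → A → ℝ)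
    (φ : X → A) (K : ℝ) (hK : 1 ≤ K)
    (μ : X → ℝ) (hμ1 : ∀ x, 1 ≤ μ x) (hμK : ∀ x, μ x ≤ K)
    (hμ : ∀ x a, 1 + ∑' y, q x a y * μ y ≤ μ x)
    (β : ℝ) (hβl : (K - 1) / K ≤ β) :
    letI Qφ : X → X → ℝ := fun x y => q x (φ x) y
    letI cφ : X → ℝ := fun x => c x (φ x)
    letI Pt : Option X → Option X → ℝ := fun x y =>
      match x, y with
      | some x, some y => q x (φ x) y * μ y / (β * μ x)
      | some x, none => 1 - (∑' z, q x (φ x) z * μ z) / (β * μ x)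
      | none, some _ => 0
      | none, none => 1
    letI ct : Option X → ℝ := fun x =>
      match x with
      | some x => c x (φ x) / μ x
      | none => 0
    (∀ (n : ℕ) (x : X), β ^ n * iterR Pt ct n (some x) = (μ x)⁻¹ * iterR Qφ cφ n x) ∧
    (∀ x : X, (∑' n : ℕ, iterR Qφ cφ n x)
        = μ x * ∑' n : ℕ, β ^ n * iterR Pt ct n (some x)) := by
  have hμ0 : ∀ x, μ x ≠ 0 := fun x => (zero_lt_one.trans_le (hμ1 x)).ne'
  -- `Pt` divides by `β`, which is junk at `β = 0`; but then `K = 1`, so `μ ≡ 1` and `q ≡ 0`.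
  have hq_zero : β = 0 → ∀ x y, q x (φ x) y = 0 := by
    rintro rfl x
    have hK1 : K = 1 := by
      have := (div_le_iff₀ (zero_lt_one.trans_le hK)).mp hβl
      linarith
    have hμ_one : ∀ y, μ y = 1 := fun y => le_antisymm (hK1 ▸ hμK y) (hμ1 y)
    have hsum : ∑' y, q x (φ x) y ≤ 0 := by simpa [hμ_one] using hμ x (φ x)
    exact fun y => le_antisymm
      (((hqs x (φ x)).le_tsum y fun z _ => hq0 x (φ x) z).trans hsum) (hq0 x (φ x) y)
  have hPt : ∀ x y, β * (q x (φ x) y * μ y / (β * μ x)) = (μ x)⁻¹ * q x (φ x) y * μ y := by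
    intro x y
    rcases eq_or_ne β 0 with hβ | hβ
    · simp [hβ, hq_zero hβ x y]
    · field_simp
  exact ⟨hv_iterR_eq hμ0 hPt (fun _ => rfl) (fun _ => div_eq_inv_mul _ _) rfl,
    hv_tsum_eq hμ0 hPt (fun _ => rfl) (fun _ => div_eq_inv_mul _ _) rfl⟩
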